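/- Let R = MvPolynomial (Fin 16) ℚ, let ℍ(R) be the quaternion algebra over R (Mathlib's QuaternionAlgebra R (−1) (−1)), and form the symbolic octonions A = (a + b·i + c·j + d·k, e + f·i + g·j + h·k) and P = (p + q·i + r·j + s·k, t + u·i + v·j + w·k) in ℍ(R) × ℍ(R), where a, b, c, d, e, f, g, h, p, q, r, s, t, u, v, w are the 16 distinct polynomial variables, with the Cayley–Dickson product (x₁, x₂) * (y₁, y₂) := (x₁*y₁ − (star y₂)*x₂, y₂*x₁ + x₂*(star y₁)). Let M be the 8×8 matrix over R whose i-th row consists of the 8 coordinates of A * (eᵢ * P) with respect to the standard octonion basis e₁, …, e₈. Then the 64 entries of M are pairwise distinct polynomials, and M * Mᵀ = ((a² + b² + c² + d² + e² + f² + g² + h²) * (p² + q² + r² + s² + t² + u² + v² + w²)) • (identity matrix); hence M is a symbolic semi-magic square of squares with orthogonal rows and constant N(A)·N(P). -/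

import Mathlib

open Matrix MvPolynomial

/-- The base polynomial ring `ℚ[a,b,…,h,p,q,…,w]` in 16 variables. -/
noncomputable abbrev Rpoly : Type := MvPolynomial (Fin 16) ℚ

/-- The quaternion algebra `ℍ(R)` over the polynomial ring. -/
noncomputable abbrev HR : Type := QuaternionAlgebra Rpoly (-1) 0 (-1)

/-- The Cayley–Dickson product on `ℍ(R) × ℍ(R)`, modelling symbolic
octonions. -/
noncomputable def omulR (x y : HR × HR) : HR × HR :=
  (x.1 * y.1 - star y.2 * x.2, y.2 * x.1 + x.2 * star y.1)

/-- The standard octonion basis `e₁, …, e₈` in `ℍ(R) × ℍ(R)`. -/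
noncomputable def obasisR : Fin 8 → HR × HR
  | 0 => (1, 0)
  | 1 => (⟨0, 1, 0, 0⟩, 0)
  | 2 => (⟨0, 0, 1, 0⟩, 0)
  | 3 => (⟨0, 0, 0, 1⟩, 0)
  | 4 => (0, 1)
  | 5 => (0, ⟨0, 1, 0, 0⟩)
  | 6 => (0, ⟨0, 0, 1, 0⟩)
  | 7 => (0, ⟨0, 0, 0, 1⟩)

/-- The eight coordinates of a symbolic octonion. -/
noncomputable def ocoordR (x : HR × HR) : Fin 8 → Rpoly
  | 0 => x.1.re
  | 1 => x.1.imI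
  | 2 => x.1.imJ
  | 3 => x.1.imK
  | 4 => x.2.re
  | 5 => x.2.imI
  | 6 => x.2.imJ
  | 7 => x.2.imK

/-- The symbolic octonion `A = (a + bi + cj + dk, e + fi + gj + hk)`. -/
noncomputable def Asym : HR × HR :=
  (⟨X 0, X 1, X 2, X 3⟩, ⟨X 4, X 5, X 6, X 7⟩)

/-- The symbolic octonion `P = (p + qi + rj + sk, t + ui + vj + wk)`. -/
noncomputable def Psym : HR × HR :=
  (⟨X 8, X 9, X 10, X 11⟩, ⟨X 12, X 13, X 14, X 15⟩)

/-!
Row `i` of `M` is the coordinate vector of `A (eᵢ P)`. Left and right multiplication by an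
octonion scale the coordinate inner product by the norm of that octonion (a polynomial identity
in the coordinates), and the basis `eᵢ` is orthonormal, so
`⟨A (eᵢ P), A (eⱼ P)⟩ = N(A) ⟨eᵢ P, eⱼ P⟩ = N(A) N(P) δᵢⱼ`.
The 64 entries are distinct polynomials because they already take distinct values when the
16 variables are specialized to the rationals `0², 1², …, 15²`.
-/

abbrev Octonion (R : Type*) [CommRing R] : Type _ :=
  QuaternionAlgebra R (-1) 0 (-1) × QuaternionAlgebra R (-1) 0 (-1)

namespace Octonion

variable {R S : Type*} [CommRing R] [CommRing S]

def mul (x y : Octonion R) : Octonion R :=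
  (x.1 * y.1 - star y.2 * x.2, y.2 * x.1 + x.2 * star y.1)

def basis : Fin 8 → Octonion R
  | 0 => (1, 0)
  | 1 => (⟨0, 1, 0, 0⟩, 0)
  | 2 => (⟨0, 0, 1, 0⟩, 0)
  | 3 => (⟨0, 0, 0, 1⟩, 0)
  | 4 => (0, 1)
  | 5 => (0, ⟨0, 1, 0, 0⟩)
  | 6 => (0, ⟨0, 0, 1, 0⟩)
  | 7 => (0, ⟨0, 0, 0, 1⟩)

def coord (x : Octonion R) : Fin 8 → R :=
  ![x.1.re, x.1.imI, x.1.imJ, x.1.imK, x.2.re, x.2.imI, x.2.imJ, x.2.imK]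

def dot (x y : Octonion R) : R := coord x ⬝ᵥ coord y

def normSq (x : Octonion R) : R := dot x x

theorem dot_eq (x y : Octonion R) : dot x y =
    x.1.re * y.1.re + x.1.imI * y.1.imI + x.1.imJ * y.1.imJ + x.1.imK * y.1.imK +
    (x.2.re * y.2.re + x.2.imI * y.2.imI + x.2.imJ * y.2.imJ + x.2.imK * y.2.imK) := by
  simp only [dot, dotProduct, coord, Fin.sum_univ_eight, cons_val_zero, cons_val_one, cons_val]
  ring

theorem dot_mul_left (a x y : Octonion R) : dot (mul a x) (mul a y) = normSq a * dot x y := by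
  simp only [normSq, dot_eq, mul, QuaternionAlgebra.re_mul, QuaternionAlgebra.imI_mul,
    QuaternionAlgebra.imJ_mul, QuaternionAlgebra.imK_mul, QuaternionAlgebra.re_sub,
    QuaternionAlgebra.imI_sub, QuaternionAlgebra.imJ_sub, QuaternionAlgebra.imK_sub,
    QuaternionAlgebra.re_add, QuaternionAlgebra.imI_add, QuaternionAlgebra.imJ_add,
    QuaternionAlgebra.imK_add, QuaternionAlgebra.re_star, QuaternionAlgebra.imI_star,
    QuaternionAlgebra.imJ_star, QuaternionAlgebra.imK_star]
  ring

theorem dot_mul_right (x y p : Octonion R) : dot (mul x p) (mul y p) = dot x y * normSq p := by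
  simp only [normSq, dot_eq, mul, QuaternionAlgebra.re_mul, QuaternionAlgebra.imI_mul,
    QuaternionAlgebra.imJ_mul, QuaternionAlgebra.imK_mul, QuaternionAlgebra.re_sub,
    QuaternionAlgebra.imI_sub, QuaternionAlgebra.imJ_sub, QuaternionAlgebra.imK_sub,
    QuaternionAlgebra.re_add, QuaternionAlgebra.imI_add, QuaternionAlgebra.imJ_add,
    QuaternionAlgebra.imK_add, QuaternionAlgebra.re_star, QuaternionAlgebra.imI_star,
    QuaternionAlgebra.imJ_star, QuaternionAlgebra.imK_star]
  ring

theorem coord_basis (i : Fin 8) : coord (basis i : Octonion R) = Pi.single i 1 := by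
  ext j
  fin_cases i <;> fin_cases j <;> simp [coord, basis]

theorem dot_basis (i j : Fin 8) :
    dot (basis i : Octonion R) (basis j) = (1 : Matrix (Fin 8) (Fin 8) R) i j := by
  simp [dot, coord_basis, Pi.single_apply, one_apply, eq_comm]

def map (f : R →+* S) (x : Octonion R) : Octonion S :=
  (⟨f x.1.re, f x.1.imI, f x.1.imJ, f x.1.imK⟩, ⟨f x.2.re, f x.2.imI, f x.2.imJ, f x.2.imK⟩)

theorem coord_map (f : R →+* S) (x : Octonion R) (j : Fin 8) :
    coord (map f x) j = f (coord x j) := by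
  fin_cases j <;> rfl

theorem map_mul (f : R →+* S) (x y : Octonion R) : map f (mul x y) = mul (map f x) (map f y) := by
  simp [Octonion.map, mul]

theorem map_basis (f : R →+* S) (i : Fin 8) : map f (basis i) = basis i := by
  fin_cases i <;> simp [Octonion.map, basis, QuaternionAlgebra.ext_iff]

end Octonion

open Octonion

theorem omulR_eq_mul : omulR = Octonion.mul := rfl

theorem obasisR_eq_basis : obasisR = Octonion.basis := by
  ext i : 1
  fin_cases i <;> rfl

theorem ocoordR_eq_coord (x : HR × HR) : ocoordR x = coord x := by
  ext j
  fin_cases j <;> rfl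

theorem normSq_Asym : normSq Asym =
    X 0 ^ 2 + X 1 ^ 2 + X 2 ^ 2 + X 3 ^ 2 + X 4 ^ 2 + X 5 ^ 2 + X 6 ^ 2 + X 7 ^ 2 := by
  simp only [normSq, dot_eq, Asym]
  ring

theorem normSq_Psym : normSq Psym =
    X 8 ^ 2 + X 9 ^ 2 + X 10 ^ 2 + X 11 ^ 2 + X 12 ^ 2 + X 13 ^ 2 + X 14 ^ 2 + X 15 ^ 2 := by
  simp only [normSq, dot_eq, Psym]
  ring

def squares : Fin 16 → ℚ := fun k => (k : ℚ) ^ 2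

theorem map_eval_Asym : map (eval squares) Asym = (⟨0, 1, 4, 9⟩, ⟨16, 25, 36, 49⟩) := by
  norm_num [Octonion.map, Asym, squares]

theorem map_eval_Psym : map (eval squares) Psym =
    (⟨64, 81, 100, 121⟩, ⟨144, 169, 196, 225⟩) := by
  norm_num [Octonion.map, Psym, squares]

-- `squares` was found by search: simpler points such as `k ↦ k + 1` make some entries coincide.
theorem injective_coord_mul_basis_mul_at_squares :
    Function.Injective fun ij : Fin 8 × Fin 8 =>
      coord (mul ((⟨0, 1, 4, 9⟩, ⟨16, 25, 36, 49⟩) : Octonion ℚ)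
        (mul (basis ij.1) (⟨64, 81, 100, 121⟩, ⟨144, 169, 196, 225⟩))) ij.2 := by
  decide +kernel

/-- The paper's theorem: the symbolic 8×8 matrix whose `i`-th row consists of
the coordinates of `A * (eᵢ * P)` has pairwise distinct entries and satisfies
`M * Mᵀ = N(A)N(P) • I`, i.e. it is a symbolic semi-magic square of squares
with orthogonal rows and constant `N(A)·N(P)`. -/
theorem symbolic_octonion_semimagic
    (M : Matrix (Fin 8) (Fin 8) Rpoly)
    (hM : ∀ i j, M i j = ocoordR (omulR Asym (omulR (obasisR i) Psym)) j) :
    Function.Injective (fun ij : Fin 8 × Fin 8 => M ij.1 ij.2) ∧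
    M * Mᵀ =
      ((X 0 ^ 2 + X 1 ^ 2 + X 2 ^ 2 + X 3 ^ 2 +
        X 4 ^ 2 + X 5 ^ 2 + X 6 ^ 2 + X 7 ^ 2) *
       (X 8 ^ 2 + X 9 ^ 2 + X 10 ^ 2 + X 11 ^ 2 +
        X 12 ^ 2 + X 13 ^ 2 + X 14 ^ 2 + X 15 ^ 2) : Rpoly) •
      (1 : Matrix (Fin 8) (Fin 8) Rpoly) := by
  have hrow (i : Fin 8) : M i = coord (mul Asym (mul (basis i) Psym)) := by
    ext j
    rw [hM, ocoordR_eq_coord, omulR_eq_mul, obasisR_eq_basis]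
  constructor
  · refine Function.Injective.of_comp (f := eval squares) ?_
    convert injective_coord_mul_basis_mul_at_squares using 2 with ij
    rw [Function.comp_apply, hrow, ← coord_map, Octonion.map_mul, Octonion.map_mul, map_basis,
      map_eval_Asym, map_eval_Psym]
  · refine Matrix.ext fun i j => ?_
    change M i ⬝ᵥ M j = _
    rw [hrow, hrow, ← dot, dot_mul_left, dot_mul_right, dot_basis,
      normSq_Asym, normSq_Psym, Matrix.smul_apply, smul_eq_mul]
    ring
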